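/- arXiv:1712.00875 — 3 statements merged into one kernel-verified Lean document; each statement's English description precedes it below -/
import Mathlib

section
/- For a locally finite weighted graph with Laplacian Δ and combinatorial distance d, for vertices x ≠ y, the limit κ(x,y) := lim_{ε→0+} (1/ε)(1 - W(m_x^ε, m_y^ε)/d(x,y)) equals the infimum of ∇_{xy} Δf := (Δf(x) - Δf(y))/d(x,y) over all finitely supported functions f with Lipschitz constant at most 1 (with respect to d) satisfying (f(y)-f(x))/d(x,y) = 1. -/
open scoped BigOperators

/-- A locally finite weighted graph. -/
structure WeightedGraph (V : Type) where
  w : V → V → ℝ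
  m : V → ℝ
  symm : ∀ x y, w x y = w y x
  loopless : ∀ x, w x x = 0
  nonneg : ∀ x y, 0 ≤ w x y
  mpos : ∀ x, 0 < m x
  locFin : ∀ x, Set.Finite {y | w x y ≠ 0}

namespace WeightedGraph

variable {V : Type} (G : WeightedGraph V)

/-- The underlying simple graph. -/
def toSimple : SimpleGraph V where
  Adj x y := x ≠ y ∧ G.w x y ≠ 0
  symm := by
    constructor
    intro x y h
    exact ⟨h.1.symm, by rw [G.symm y x]; exact h.2⟩
  loopless := by constructor; intro x h; exact h.1 rfl

/-- The combinatorial graph distance. -/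
noncomputable def dist (x y : V) : ℕ := G.toSimple.dist x y

/-- The graph Laplacian. -/
noncomputable def lap (f : V → ℝ) (x : V) : ℝ :=
  (∑ᶠ y, G.w x y * (f y - f x)) / G.m x

/-- The weighted vertex degree. -/
noncomputable def deg (x : V) : ℝ := (∑ᶠ y, G.w x y) / G.m x

/-- `f` is `1`-Lipschitz with respect to the combinatorial distance. -/
def Lip1 (f : V → ℝ) : Prop := ∀ x y, |f x - f y| ≤ (G.dist x y : ℝ)

/-- The Ollivier curvature, via the limit-free formula
`κ(x,y) = inf {∇_{xy} Δ f : f ∈ Lip(1) ∩ C_c(V), ∇_{yx} f = 1}`. -/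
noncomputable def curv (x y : V) : ℝ :=
  sInf { c | ∃ f : V → ℝ, G.Lip1 f ∧ (Function.support f).Finite ∧
    f y - f x = (G.dist x y : ℝ) ∧ c = (G.lap f x - G.lap f y) / (G.dist x y : ℝ) }

end WeightedGraph

/-- The L¹-Wasserstein distance with cost the combinatorial distance,
via Kantorovich duality: supremum over bounded 1-Lipschitz functions. -/
noncomputable def Wass {V : Type} (G : WeightedGraph V) (μ ν : V → ℝ) : ℝ :=
  sSup { c | ∃ f : V → ℝ, G.Lip1 f ∧ (∃ C, ∀ x, |f x| ≤ C) ∧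
    c = ∑' x, f x * (μ x - ν x) }

/-- The first-order-in-`ε` lazy random walk measure `m_x^ε(y) = 1_y(x) + ε Δ1_y(x)`. -/
noncomputable def ollMeas {V : Type} [DecidableEq V] (G : WeightedGraph V) (ε : ℝ) (x : V) : V → ℝ :=
  fun y => (if y = x then 1 else 0) + ε * G.lap (fun z => if z = y then (1 : ℝ) else 0) x

/-!
Once `ε (deg x + deg y) ≤ 1` the Wasserstein distance equals `d(x,y) (1 - ε κ(x,y))` exactly, so
the quotient is eventually constant. Pairing `m_x^ε - m_y^ε` with `f` gives
`f x - f y + ε (Δf x - Δf y)`, and the negated competitors of the infimum give the lower bound.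
For the upper bound, a 1-Lipschitz `f` with `f x = 0` is squeezed into
`min (max f (d(x,y) - d(y,·))) d(x,·)`, which rises by exactly `d(x,y)` from `x` to `y` and stays
within the defect `t = d(x,y) - f y` above `f`; this moves `Δ` at `x` and `y` by at most
`t deg`, which `ε deg ≤ 1` absorbs. Truncating far from `x` makes it finitely supported without
changing `Δ` near `x` and `y`.
-/

open Function

theorem exists_abs_le_of_finite_support {ι : Type*} {f : ι → ℝ} (hf : (support f).Finite) :
    ∃ C, ∀ i, |f i| ≤ C := by
  have hrange : (Set.range f).Finite :=
    ((hf.image f).insert 0).subset (range_subset_insert_image_support f)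
  obtain ⟨C, hC⟩ := (hrange.image (|·|)).bddAbove
  exact ⟨C, fun i => hC ⟨f i, ⟨i, rfl⟩, rfl⟩⟩

theorem SimpleGraph.Connected.finite_setOf_dist_le {V : Type*} {G : SimpleGraph V}
    (hG : ∀ v, (G.neighborSet v).Finite) (hconn : G.Connected) (x : V) (n : ℕ) :
    {z | G.dist x z ≤ n}.Finite := by
  induction n with
  | zero => simp [hconn.dist_eq_zero_iff]
  | succ n ih =>
    refine ((ih.biUnion fun u _ => hG u).insert x).subset fun z hz => ?_
    obtain ⟨p, hp⟩ := hconn.exists_walk_length_eq_dist z x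
    cases p with
    | nil => exact Set.mem_insert _ _
    | @cons _ u _ hadj q =>
      refine Set.mem_insert_of_mem _ (Set.mem_biUnion (x := u) ?_ hadj.symm)
      have hq : G.dist u x ≤ q.length := SimpleGraph.dist_le q
      simp only [Set.mem_ofPred_eq, SimpleGraph.Walk.length_cons] at hz hp ⊢
      rw [SimpleGraph.dist_comm] at hz hq
      omega

namespace WeightedGraph

variable {V : Type} (G : WeightedGraph V)

noncomputable def nbr (x : V) : Finset V := (G.locFin x).toFinset

variable {G}

theorem mem_nbr {x z : V} : z ∈ G.nbr x ↔ G.w x z ≠ 0 := (G.locFin x).mem_toFinset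

theorem toSimple_adj_of_mem_nbr {x z : V} (hz : z ∈ G.nbr x) : G.toSimple.Adj x z := by
  refine ⟨fun hxz => ?_, mem_nbr.1 hz⟩
  subst hxz
  exact mem_nbr.1 hz (G.loopless x)

theorem dist_eq_one_of_mem_nbr {x z : V} (hz : z ∈ G.nbr x) : G.dist x z = 1 :=
  SimpleGraph.dist_eq_one_iff_adj.2 (toSimple_adj_of_mem_nbr hz)

theorem finite_neighborSet_toSimple (x : V) : (G.toSimple.neighborSet x).Finite :=
  (G.locFin x).subset fun _ h => h.2

theorem dist_triangle (hconn : G.toSimple.Connected) (x y z : V) :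
    (G.dist x z : ℝ) ≤ G.dist x y + G.dist y z := mod_cast hconn.dist_triangle

theorem dist_comm (x y : V) : G.dist x y = G.dist y x := SimpleGraph.dist_comm

theorem lap_eq_sum (f : V → ℝ) (x : V) :
    G.lap f x = (∑ z ∈ G.nbr x, G.w x z * (f z - f x)) / G.m x := by
  rw [lap, finsum_eq_sum_of_support_subset]
  intro z hz
  rw [Finset.mem_coe, mem_nbr]
  exact left_ne_zero_of_mul hz

theorem deg_eq_sum (x : V) : G.deg x = (∑ z ∈ G.nbr x, G.w x z) / G.m x := by
  rw [deg, finsum_eq_sum_of_support_subset]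
  intro z hz
  rwa [Finset.mem_coe, mem_nbr]

theorem deg_nonneg (x : V) : 0 ≤ G.deg x := by
  rw [deg_eq_sum]
  exact div_nonneg (Finset.sum_nonneg fun z _ => G.nonneg x z) (G.mpos x).le

theorem lap_congr {f g : V → ℝ} {x : V} (h : ∀ z, G.dist x z ≤ 1 → f z = g z) :
    G.lap f x = G.lap g x := by
  have hx : f x = g x := h x (by simp [dist])
  simp only [lap_eq_sum, hx]
  congr 1
  refine Finset.sum_congr rfl fun z hz => ?_
  rw [h z (dist_eq_one_of_mem_nbr hz).le]

theorem lap_neg (f : V → ℝ) (x : V) : G.lap (fun z => -f z) x = -G.lap f x := by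
  simp only [lap_eq_sum, ← neg_div, ← Finset.sum_neg_distrib]
  congr 1
  exact Finset.sum_congr rfl fun z _ => by ring

theorem lap_const (c : ℝ) (x : V) : G.lap (fun _ => c) x = 0 := by simp [lap]

theorem lap_le_lap_add_mul_deg {f g : V → ℝ} {x : V} {c : ℝ}
    (h : ∀ z ∈ G.nbr x, f z - f x ≤ g z - g x + c) :
    G.lap f x ≤ G.lap g x + c * G.deg x := by
  rw [lap_eq_sum, lap_eq_sum, deg_eq_sum, mul_div_assoc', ← add_div, Finset.mul_sum,
    ← Finset.sum_add_distrib]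
  refine div_le_div_of_nonneg_right (Finset.sum_le_sum fun z hz => ?_) (G.mpos x).le
  calc G.w x z * (f z - f x) ≤ G.w x z * (g z - g x + c) :=
        mul_le_mul_of_nonneg_left (h z hz) (G.nonneg x z)
    _ = _ := by ring

theorem abs_lap_le_deg {f : V → ℝ} (hf : G.Lip1 f) (x : V) : |G.lap f x| ≤ G.deg x := by
  have hnbr : ∀ z ∈ G.nbr x, |f z - f x| ≤ 1 := fun z hz => by
    simpa [dist_comm, dist_eq_one_of_mem_nbr hz] using hf z x
  have hle : G.lap f x ≤ G.lap (fun _ => 0) x + 1 * G.deg x :=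
    lap_le_lap_add_mul_deg fun z hz => by linarith [(abs_le.1 (hnbr z hz)).2]
  have hge : G.lap (fun _ => 0) x ≤ G.lap f x + 1 * G.deg x :=
    lap_le_lap_add_mul_deg fun z hz => by linarith [(abs_le.1 (hnbr z hz)).1]
  simp only [lap_const, zero_add, one_mul] at hle hge
  exact abs_le.2 ⟨by linarith, by linarith⟩

theorem lip1_const (c : ℝ) : G.Lip1 fun _ => c := fun a b => by simp

theorem Lip1.neg {f : V → ℝ} (hf : G.Lip1 f) : G.Lip1 fun z => -f z := fun a b => by
  simpa only [neg_sub_neg, abs_sub_comm] using hf a b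

theorem Lip1.sub_const {f : V → ℝ} (hf : G.Lip1 f) (c : ℝ) : G.Lip1 fun z => f z - c :=
  fun a b => by simpa using hf a b

theorem Lip1.const_sub {f : V → ℝ} (hf : G.Lip1 f) (c : ℝ) : G.Lip1 fun z => c - f z :=
  fun a b => by simpa [abs_sub_comm] using hf a b

theorem Lip1.max {f g : V → ℝ} (hf : G.Lip1 f) (hg : G.Lip1 g) :
    G.Lip1 fun z => max (f z) (g z) :=
  fun a b => (abs_max_sub_max_le_max _ _ _ _).trans (max_le (hf a b) (hg a b))

theorem Lip1.min {f g : V → ℝ} (hf : G.Lip1 f) (hg : G.Lip1 g) :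
    G.Lip1 fun z => min (f z) (g z) :=
  fun a b => (abs_min_sub_min_le_max _ _ _ _).trans (max_le (hf a b) (hg a b))

theorem Lip1.abs_le_dist {f : V → ℝ} (hf : G.Lip1 f) {x : V} (hx : f x = 0) (z : V) :
    |f z| ≤ G.dist x z := by
  simpa [hx, dist_comm z x] using hf z x

theorem lip1_dist (hconn : G.toSimple.Connected) (x : V) : G.Lip1 fun z => (G.dist x z : ℝ) :=
  fun a b => by
    have hab := dist_triangle hconn x a b
    have hba := dist_triangle hconn x b a
    rw [dist_comm b a] at hba
    exact abs_sub_le_iff.2 ⟨by linarith, by linarith⟩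

/-- Clamping `f` between `±(2r - d(x,·))⁺` leaves it unchanged on the ball of radius `r`. -/
theorem exists_lip1_finite_support_eqOn (hconn : G.toSimple.Connected) {f : V → ℝ}
    (hf : G.Lip1 f) {x : V} (hx : f x = 0) (r : ℕ) :
    ∃ g : V → ℝ, G.Lip1 g ∧ (support g).Finite ∧ ∀ z, G.dist x z ≤ r → g z = f z := by
  set c : V → ℝ := fun z => max (2 * r - G.dist x z) 0
  have hc : G.Lip1 c := ((lip1_dist hconn x).const_sub _).max (lip1_const 0)
  refine ⟨fun z => max (min (f z) (c z)) (-c z), (hf.min hc).max hc.neg, ?_, fun z hz => ?_⟩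
  · refine (hconn.finite_setOf_dist_le finite_neighborSet_toSimple x (2 * r)).subset
      fun z hz => ?_
    by_contra hfar
    have hfar' : (2 * r : ℝ) ≤ G.dist x z := by exact_mod_cast (not_le.1 hfar).le
    have hcz : c z = 0 := max_eq_right (by linarith)
    simp [hcz] at hz
  · have hfz := abs_le.1 ((hf.abs_le_dist hx z).trans (show (G.dist x z : ℝ) ≤ c z from
      le_max_of_le_left (by linarith [(Nat.cast_le (α := ℝ)).2 hz])))
    simp only [min_eq_left hfz.2, max_eq_left hfz.1]

theorem exists_lip1_squeeze (hconn : G.toSimple.Connected) {f : V → ℝ} (hf : G.Lip1 f)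
    {x : V} (hx : f x = 0) (y : V) :
    ∃ h : V → ℝ, G.Lip1 h ∧ h x = 0 ∧ h y = G.dist x y ∧
      (∀ z, f z ≤ h z) ∧ ∀ z, h z ≤ f z + (G.dist x y - f y) := by
  refine ⟨fun z => min (max (f z) (G.dist x y - G.dist y z)) (G.dist x z),
    (hf.max ((lip1_dist hconn y).const_sub _)).min (lip1_dist hconn x), ?_, ?_, fun z => ?_,
    fun z => ?_⟩
  · simp [hx, dist]
  · simp [dist]
  · exact le_min (le_max_left _ _) (abs_le.1 (hf.abs_le_dist hx z)).2
  · have hfy := (abs_le.1 (hf.abs_le_dist hx y)).2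
    have hyz := (abs_le.1 (hf y z)).2
    exact (min_le_left _ _).trans (max_le (by linarith) (by linarith))

/-- The set whose infimum is, by definition, `G.curv x y`. -/
def curvSet (x y : V) : Set ℝ :=
  { c | ∃ f : V → ℝ, G.Lip1 f ∧ (support f).Finite ∧
    f y - f x = G.dist x y ∧ c = (G.lap f x - G.lap f y) / G.dist x y }

theorem exists_mem_curvSet_le (hconn : G.toSimple.Connected) {x y : V} (hxy : x ≠ y)
    {f : V → ℝ} (hf : G.Lip1 f) :
    ∃ c ∈ G.curvSet x y, G.dist x y * c ≤
      G.lap f x - G.lap f y + (G.dist x y - (f y - f x)) * (G.deg x + G.deg y) := by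
  have hd : (G.dist x y : ℝ) ≠ 0 := by exact_mod_cast (hconn.pos_dist_of_ne hxy).ne'
  obtain ⟨h, hh, hhx, hhy, hfh, hhf⟩ :=
    exists_lip1_squeeze hconn (hf.sub_const (f x)) (sub_self (f x)) y
  obtain ⟨g, hg, hgfin, hgh⟩ := exists_lip1_finite_support_eqOn hconn hh hhx (G.dist x y + 1)
  have hlapx : G.lap g x = G.lap h x :=
    lap_congr fun z hz => hgh z (by omega)
  have hlapy : G.lap g y = G.lap h y :=
    lap_congr fun z hz => hgh z (hconn.dist_triangle.trans (Nat.add_le_add_left hz _))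
  have hlex : G.lap h x ≤ G.lap f x + (G.dist x y - (f y - f x)) * G.deg x :=
    lap_le_lap_add_mul_deg fun z _ => by linarith [hhf z]
  have hley : G.lap f y ≤ G.lap h y + (G.dist x y - (f y - f x)) * G.deg y :=
    lap_le_lap_add_mul_deg fun z _ => by linarith [hfh z]
  refine ⟨_, ⟨g, hg, hgfin, ?_, rfl⟩, ?_⟩
  · rw [hgh x (by simp [dist]), hgh y (by omega), hhx, hhy, sub_zero]
  · rw [mul_div_cancel₀ _ hd, hlapx, hlapy]
    linarith

theorem curvSet_nonempty (hconn : G.toSimple.Connected) {x y : V} (hxy : x ≠ y) :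
    (G.curvSet x y).Nonempty :=
  let ⟨c, hc, _⟩ := exists_mem_curvSet_le hconn hxy (lip1_const 0)
  ⟨c, hc⟩

theorem bddBelow_curvSet (hconn : G.toSimple.Connected) {x y : V} (hxy : x ≠ y) :
    BddBelow (G.curvSet x y) := by
  have hd : (0 : ℝ) < G.dist x y := by exact_mod_cast hconn.pos_dist_of_ne hxy
  refine ⟨-((G.deg x + G.deg y) / G.dist x y), ?_⟩
  rintro _ ⟨f, hf, -, -, rfl⟩
  have hx := abs_le.1 (abs_lap_le_deg hf x)
  have hy := abs_le.1 (abs_lap_le_deg hf y)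
  rw [← neg_div]
  gcongr
  linarith

section OllivierMeasure

variable [DecidableEq V]

theorem ollMeas_eq_zero {ε : ℝ} {x z : V} (hz : z ∉ insert x (G.nbr x)) :
    ollMeas G ε x z = 0 := by
  rw [Finset.mem_insert, not_or] at hz
  rw [ollMeas, if_neg hz.1, lap_eq_sum, Finset.sum_eq_zero fun u hu => ?_]
  · simp
  · rw [if_neg (ne_of_mem_of_not_mem hu hz.2), if_neg (Ne.symm hz.1), sub_zero, mul_zero]

theorem tsum_mul_ollMeas (ε : ℝ) (x : V) (f : V → ℝ) :
    ∑' z, f z * ollMeas G ε x z = f x + ε * G.lap f x := by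
  have hx : x ∈ insert x (G.nbr x) := Finset.mem_insert_self _ _
  have hlap : ∑ z ∈ insert x (G.nbr x), f z * G.lap (fun u => if u = z then 1 else 0) x =
      G.lap f x := by
    simp only [lap_eq_sum, mul_div_assoc', ← Finset.sum_div, Finset.mul_sum]
    rw [Finset.sum_comm]
    congr 1
    refine Finset.sum_congr rfl fun u hu => ?_
    have hu' : u ∈ insert x (G.nbr x) := Finset.mem_insert_of_mem hu
    simp only [mul_sub, Finset.sum_sub_distrib, mul_ite, mul_one, mul_zero, Finset.sum_ite_eq,
      hx, hu', if_true]
    ring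
  rw [tsum_eq_sum fun z hz => by rw [ollMeas_eq_zero hz, mul_zero]]
  simp only [ollMeas, mul_add, Finset.sum_add_distrib, mul_ite, mul_one, mul_zero,
    Finset.sum_ite_eq', hx, if_true, mul_left_comm _ ε, ← Finset.mul_sum, hlap]

theorem tsum_mul_ollMeas_sub (ε : ℝ) (x y : V) (f : V → ℝ) :
    ∑' z, f z * (ollMeas G ε x z - ollMeas G ε y z) =
      f x - f y + ε * (G.lap f x - G.lap f y) := by
  have hsum : ∀ x, Summable fun z => f z * ollMeas G ε x z := fun x =>
    summable_of_ne_finset_zero fun z hz => by rw [ollMeas_eq_zero hz, mul_zero]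
  simp only [mul_sub]
  rw [(hsum x).tsum_sub (hsum y), tsum_mul_ollMeas, tsum_mul_ollMeas]
  ring

theorem wass_ollMeas_eq (hconn : G.toSimple.Connected) {x y : V} (hxy : x ≠ y) {ε : ℝ}
    (hε : 0 < ε) (hεdeg : ε * (G.deg x + G.deg y) ≤ 1) :
    Wass G (ollMeas G ε x) (ollMeas G ε y) = G.dist x y - ε * G.dist x y * G.curv x y := by
  have hd : (0 : ℝ) < G.dist x y := Nat.cast_pos.2 (hconn.pos_dist_of_ne hxy)
  have hne := curvSet_nonempty hconn hxy
  have hbdd := bddBelow_curvSet hconn hxy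
  set φ : ℝ → ℝ := fun c => G.dist x y - ε * G.dist x y * c
  have hφ : Antitone φ := fun a b hab =>
    sub_le_sub_left (mul_le_mul_of_nonneg_left hab (mul_pos hε hd).le) _
  set B : Set ℝ := {c | ∃ f : V → ℝ, G.Lip1 f ∧ (∃ C, ∀ x, |f x| ≤ C) ∧
    c = ∑' z, f z * (ollMeas G ε x z - ollMeas G ε y z)}
  change sSup B = φ (G.curv x y)
  have upper : ∀ b ∈ B, b ≤ φ (G.curv x y) := by
    rintro _ ⟨f, hf, -, rfl⟩
    obtain ⟨c, hc, hdc⟩ := exists_mem_curvSet_le hconn hxy hf.neg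
    rw [lap_neg, lap_neg] at hdc
    have hκ : G.curv x y ≤ c := csInf_le hbdd hc
    have hfxy : f x - f y ≤ G.dist x y := (le_abs_self _).trans (hf x y)
    rw [tsum_mul_ollMeas_sub]
    linarith [mul_le_mul_of_nonneg_left hdc hε.le,
      mul_le_mul_of_nonneg_left hκ (mul_pos hε hd).le,
      mul_le_mul_of_nonneg_left hεdeg (sub_nonneg.2 hfxy)]
  have lower : φ '' G.curvSet x y ⊆ B := by
    rintro _ ⟨_, ⟨f, hf, hfin, hfxy, rfl⟩, rfl⟩
    obtain ⟨C, hC⟩ := exists_abs_le_of_finite_support hfin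
    refine ⟨fun z => -f z, hf.neg, ⟨C, fun z => (abs_neg (f z)).trans_le (hC z)⟩, ?_⟩
    simp only [φ]
    rw [tsum_mul_ollMeas_sub, lap_neg, lap_neg, mul_assoc ε, mul_div_cancel₀ _ hd.ne']
    linarith
  refine le_antisymm (csSup_le ((hne.image φ).mono lower) upper) ?_
  calc φ (G.curv x y) = sSup (φ '' G.curvSet x y) :=
        hφ.map_csInf_of_continuousAt (by fun_prop) hne hbdd
    _ ≤ sSup B := csSup_le_csSup ⟨_, upper⟩ (hne.image φ) lower

end OllivierMeasure

end WeightedGraph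

theorem stmt0_general {V : Type} [DecidableEq V] (G : WeightedGraph V)
    (hconn : G.toSimple.Connected) (x y : V) (hxy : x ≠ y) :
    Filter.Tendsto
      (fun ε : ℝ =>
        (1 / ε) * (1 - Wass G (ollMeas G ε x) (ollMeas G ε y) / (G.dist x y : ℝ)))
      (nhdsWithin 0 (Set.Ioi 0))
      (nhds (sInf { c | ∃ f : V → ℝ, G.Lip1 f ∧ (Function.support f).Finite ∧
        (f y - f x) / (G.dist x y : ℝ) = 1 ∧
        c = (G.lap f x - G.lap f y) / (G.dist x y : ℝ) })) := by
  have hd : (G.dist x y : ℝ) ≠ 0 := by exact_mod_cast (hconn.pos_dist_of_ne hxy).ne'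
  have hdeg : 0 < G.deg x + G.deg y + 1 := by linarith [G.deg_nonneg x, G.deg_nonneg y]
  simp only [div_eq_one_iff_eq hd]
  change Filter.Tendsto _ _ (nhds (G.curv x y))
  refine tendsto_const_nhds.congr' ?_
  filter_upwards [Ioo_mem_nhdsGT (one_div_pos.2 hdeg)] with ε ⟨hε, hεdeg⟩
  rw [G.wass_ollMeas_eq hconn hxy hε (by linarith [(lt_div_iff₀ hdeg).1 hεdeg])]
  field_simp
  ring

/-- The limit `κ(x,y) = lim_{ε→0⁺} (1/ε)(1 - W(m_x^ε, m_y^ε)/d(x,y))` exists and equals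
`inf {∇_{xy} Δ f : f ∈ Lip(1) ∩ C_c(V), ∇_{yx} f = 1}`. -/
theorem stmt0 {V : Type} [Countable V] [DecidableEq V] (G : WeightedGraph V)
    (hconn : G.toSimple.Connected) (x y : V) (hxy : x ≠ y) :
    Filter.Tendsto
      (fun ε : ℝ =>
        (1 / ε) * (1 - Wass G (ollMeas G ε x) (ollMeas G ε y) / (G.dist x y : ℝ)))
      (nhdsWithin 0 (Set.Ioi 0))
      (nhds (sInf { c | ∃ f : V → ℝ, G.Lip1 f ∧ (Function.support f).Finite ∧
        (f y - f x) / (G.dist x y : ℝ) = 1 ∧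
        c = (G.lap f x - G.lap f y) / (G.dist x y : ℝ) })) :=
  stmt0_general G hconn x y hxy
end

section
/- Let G=(ℕ₀,w,m) be a birth-death chain, i.e., w(m,n)=0 whenever |m-n| ≠ 1, and let f(r)=r. Then for all 0 ≤ r < R, the Ollivier curvature satisfies κ(r,R) = (Δf(r) - Δf(R))/(R - r) = [w(r,r+1) - w(r,r-1)]/[(R-r)m(r)] - [w(R,R+1) - w(R,R-1)]/[(R-r)m(R)], where w(0,-1) := 0. -/
open scoped BigOperators

/-!
For a birth-death chain the graph distance is `|x - y|`, so for every `1`-Lipschitz `g` the function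
`u = g - id` is antitone; if moreover `g R - g r = R - r`, then `u` is constant on `[r, R]`,
whence `Δu(r) ≥ 0 ≥ Δu(R)` and `Δg(r) - Δg(R) ≥ Δid(r) - Δid(R)`.
The infimum is attained by the finitely supported truncation `n ↦ min n (R + 1) - (R + 1)`, which
agrees with `id` up to a constant around `r` and `R`.
-/

theorem SimpleGraph.dist_hasse_nat (x y : ℕ) : (hasse ℕ).dist x y = Nat.dist x y := by
  have walk_length_ge : ∀ {u v : ℕ} (p : (hasse ℕ).Walk u v), Nat.dist u v ≤ p.length := by
    intro u v p
    induction p with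
    | nil => simp
    | cons h _ ih =>
      rw [hasse_adj, Nat.covBy_iff_add_one_eq, Nat.covBy_iff_add_one_eq] at h
      simp only [Walk.length_cons, Nat.dist] at ih ⊢
      omega
  have dist_add_le : ∀ a k, (hasse ℕ).dist a (a + k) ≤ k := by
    intro a k
    induction k with
    | zero => simp
    | succ k ih =>
      have hadj : (hasse ℕ).Adj (a + k) (a + (k + 1)) := by simp [hasse_adj]; omega
      calc (hasse ℕ).dist a (a + (k + 1))
          ≤ (hasse ℕ).dist a (a + k) + (hasse ℕ).dist (a + k) (a + (k + 1)) :=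
            hadj.reachable.dist_triangle_right a
        _ ≤ k + 1 := by rw [dist_eq_one_iff_adj.mpr hadj]; omega
  obtain ⟨p, hp⟩ := (hasse_preconnected_of_succ ℕ x y).exists_walk_length_eq_dist
  refine le_antisymm ?_ (hp ▸ walk_length_ge p)
  rcases le_total x y with h | h
  · simpa [Nat.dist_eq_sub_of_le h, Nat.add_sub_cancel' h] using dist_add_le x (y - x)
  · rw [dist_comm]
    simpa [Nat.dist_eq_sub_of_le_right h, Nat.add_sub_cancel' h] using dist_add_le y (x - y)

theorem Nat.cast_dist (x y : ℕ) : (Nat.dist x y : ℝ) = |(x : ℝ) - y| := by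
  rcases le_total x y with h | h
  · rw [Nat.dist_eq_sub_of_le h, Nat.cast_sub h, abs_sub_comm,
      abs_of_nonneg (sub_nonneg.mpr (Nat.cast_le.mpr h))]
  · rw [Nat.dist_eq_sub_of_le_right h, Nat.cast_sub h,
      abs_of_nonneg (sub_nonneg.mpr (Nat.cast_le.mpr h))]

namespace WeightedGraph

theorem lap_add {V : Type} (G : WeightedGraph V) (f g : V → ℝ) (x : V) :
    G.lap (f + g) x = G.lap f x + G.lap g x := by
  have hfin : ∀ h : V → ℝ, (Function.support fun y => G.w x y * (h y - h x)).Finite :=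
    fun h => (G.locFin x).subset fun y hy => left_ne_zero_of_mul hy
  simp only [lap, Pi.add_apply, add_sub_add_comm, mul_add, finsum_add_distrib (hfin f) (hfin g),
    add_div]

variable (G : WeightedGraph ℕ)

def IsBirthDeath : Prop := ∀ r s : ℕ, s ≠ r + 1 → r ≠ s + 1 → G.w r s = 0

variable {G}

theorem lap_eq_of_isBirthDeath (hbd : G.IsBirthDeath) (f : ℕ → ℝ) (x : ℕ) :
    G.lap f x =
      (G.w x (x + 1) * (f (x + 1) - f x) + G.w x (x - 1) * (f (x - 1) - f x)) / G.m x := by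
  rw [lap, finsum_eq_sum_of_support_subset (s := {x + 1, x - 1}), Finset.sum_pair (by omega)]
  intro y hy
  have hw : G.w x y ≠ 0 := left_ne_zero_of_mul hy
  simp only [Finset.coe_insert, Finset.coe_singleton, Set.mem_insert_iff, Set.mem_singleton_iff]
  by_contra! hy'
  exact hw (hbd x y hy'.1 (by omega))

theorem lap_natCast (hbd : G.IsBirthDeath) (x : ℕ) :
    G.lap (fun n => (n : ℝ)) x = (G.w x (x + 1) - G.w x (x - 1)) / G.m x := by
  rw [lap_eq_of_isBirthDeath hbd]
  rcases Nat.eq_zero_or_pos x with rfl | hx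
  · simp [G.loopless]
  · rw [Nat.cast_sub hx, Nat.cast_succ]
    ring_nf

theorem lap_congr_of_sub_const (hbd : G.IsBirthDeath) {f g : ℕ → ℝ} {x : ℕ} (c : ℝ)
    (h : ∀ y ≤ x + 1, f y = g y + c) : G.lap f x = G.lap g x := by
  rw [lap_eq_of_isBirthDeath hbd, lap_eq_of_isBirthDeath hbd, h x (by omega), h (x + 1) le_rfl,
    h (x - 1) (by omega)]
  ring_nf

theorem lap_nonneg_of_antitone (hbd : G.IsBirthDeath) {u : ℕ → ℝ} (hu : Antitone u) {x : ℕ}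
    (h : u (x + 1) = u x) : 0 ≤ G.lap u x := by
  rw [lap_eq_of_isBirthDeath hbd, h, sub_self, mul_zero, zero_add]
  exact div_nonneg (mul_nonneg (G.nonneg _ _) (sub_nonneg.mpr (hu (Nat.sub_le x 1))))
    (G.mpos x).le

theorem lap_nonpos_of_antitone (hbd : G.IsBirthDeath) {u : ℕ → ℝ} (hu : Antitone u) {x : ℕ}
    (h : u (x - 1) = u x) : G.lap u x ≤ 0 := by
  rw [lap_eq_of_isBirthDeath hbd, h, sub_self, mul_zero, add_zero]
  exact div_nonpos_of_nonpos_of_nonneg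
    (mul_nonpos_of_nonneg_of_nonpos (G.nonneg _ _) (sub_nonpos.mpr (hu (Nat.le_succ x))))
    (G.mpos x).le

theorem toSimple_eq_hasse (hbd : G.IsBirthDeath) (hpos : ∀ r : ℕ, 0 < G.w r (r + 1)) :
    G.toSimple = SimpleGraph.hasse ℕ := by
  ext x y
  simp only [toSimple, SimpleGraph.hasse_adj, Nat.covBy_iff_add_one_eq]
  constructor
  · rintro ⟨-, hw⟩
    by_contra! h
    exact hw (hbd x y (Ne.symm h.1) (by omega))
  · rintro (rfl | rfl)
    · exact ⟨by omega, (hpos x).ne'⟩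
    · exact ⟨by omega, by rw [G.symm]; exact (hpos y).ne'⟩

theorem dist_eq_abs_sub (hbd : G.IsBirthDeath) (hpos : ∀ r : ℕ, 0 < G.w r (r + 1)) (x y : ℕ) :
    (G.dist x y : ℝ) = |(x : ℝ) - y| := by
  rw [dist, toSimple_eq_hasse hbd hpos, SimpleGraph.dist_hasse_nat, Nat.cast_dist]

theorem antitone_sub_natCast_of_lip1 (hbd : G.IsBirthDeath) (hpos : ∀ r : ℕ, 0 < G.w r (r + 1))
    {g : ℕ → ℝ} (hg : G.Lip1 g) : Antitone fun n => g n - n := by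
  intro x y hxy
  have h := hg y x
  rw [dist_eq_abs_sub hbd hpos, abs_of_nonneg (sub_nonneg.mpr (Nat.cast_le.mpr hxy))] at h
  linarith [le_abs_self (g y - g x)]

theorem lip1_min_sub (hbd : G.IsBirthDeath) (hpos : ∀ r : ℕ, 0 < G.w r (r + 1)) (K : ℝ) :
    G.Lip1 fun n => min (n : ℝ) K - K := by
  intro x y
  rw [dist_eq_abs_sub hbd hpos, sub_sub_sub_cancel_right]
  simpa using abs_min_sub_min_le_max (x : ℝ) K y K

theorem lap_natCast_sub_le (hbd : G.IsBirthDeath) (hpos : ∀ r : ℕ, 0 < G.w r (r + 1))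
    {g : ℕ → ℝ} (hg : G.Lip1 g) {r R : ℕ} (hrR : r < R) (hgap : g R - g r = R - r) :
    G.lap (fun n => (n : ℝ)) r - G.lap (fun n => (n : ℝ)) R ≤ G.lap g r - G.lap g R := by
  set u : ℕ → ℝ := fun n => g n - n
  have hu : Antitone u := antitone_sub_natCast_of_lip1 hbd hpos hg
  have hur : u r = u R := by simp only [u]; linarith
  have hconst : ∀ n, r ≤ n → n ≤ R → u n = u R := fun n hrn hnR =>
    le_antisymm ((hu hrn).trans_eq hur) (hu hnR)
  have hg_eq : g = (fun n : ℕ => (n : ℝ)) + u := by ext n; simp [u]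
  rw [hg_eq, lap_add, lap_add]
  have := lap_nonneg_of_antitone hbd hu ((hconst (r + 1) (by omega) hrR).trans hur.symm)
  have := lap_nonpos_of_antitone hbd hu (hconst (R - 1) (by omega) (by omega))
  linarith

theorem curv_eq_of_isBirthDeath (hbd : G.IsBirthDeath) (hpos : ∀ r : ℕ, 0 < G.w r (r + 1))
    {r R : ℕ} (hrR : r < R) :
    G.curv r R = (G.lap (fun n => (n : ℝ)) r - G.lap (fun n => (n : ℝ)) R) / ((R : ℝ) - r) := by
  have hRr : (r : ℝ) < R := Nat.cast_lt.mpr hrR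
  have hd : (G.dist r R : ℝ) = R - r := by
    rw [dist_eq_abs_sub hbd hpos, abs_sub_comm, abs_of_pos (sub_pos.mpr hRr)]
  rw [curv, hd]
  refine IsLeast.csInf_eq ⟨?_, ?_⟩
  · set K : ℝ := R + 1
    have hlap : ∀ x ≤ R, G.lap (fun n => min (n : ℝ) K - K) x = G.lap (fun n => (n : ℝ)) x :=
      fun x hx => lap_congr_of_sub_const hbd (-K) fun y hy => by
        rw [min_eq_left (by simp only [K]; exact_mod_cast hy.trans (by omega))]
        ring
    refine ⟨_, lip1_min_sub hbd hpos K, ?_, ?_, by rw [hlap r hrR.le, hlap R le_rfl]⟩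
    · refine (Set.finite_Iio (R + 1)).subset fun n hn => ?_
      by_contra! h
      have hKn : K ≤ n := by simp only [K]; exact_mod_cast Set.notMem_Iio.mp h
      exact hn (by simp only [min_eq_right hKn, sub_self])
    · rw [min_eq_left (by linarith), min_eq_left (by linarith)]
      ring
  · rintro c ⟨g, hg, -, hgap, rfl⟩
    exact div_le_div_of_nonneg_right (lap_natCast_sub_le hbd hpos hg hrR hgap)
      (sub_nonneg.mpr hRr.le)

end WeightedGraph

/-- `w(0,-1) := 0` is realized by truncated subtraction: `0 - 1 = 0` and `G.w 0 0 = 0`. -/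
theorem stmt3 (G : WeightedGraph ℕ)
    (hbd : ∀ r s : ℕ, s ≠ r + 1 → r ≠ s + 1 → G.w r s = 0)
    (hpos : ∀ r : ℕ, 0 < G.w r (r + 1))
    (r R : ℕ) (hrR : r < R) :
    G.curv r R =
      (G.lap (fun n => (n : ℝ)) r - G.lap (fun n => (n : ℝ)) R) / ((R : ℝ) - (r : ℝ)) ∧
    G.curv r R =
      (G.w r (r + 1) - G.w r (r - 1)) / (((R : ℝ) - (r : ℝ)) * G.m r)
        - (G.w R (R + 1) - G.w R (R - 1)) / (((R : ℝ) - (r : ℝ)) * G.m R) := by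
  have hcurv := G.curv_eq_of_isBirthDeath hbd hpos hrR
  refine ⟨hcurv, ?_⟩
  rw [hcurv, G.lap_natCast hbd, G.lap_natCast hbd, sub_div, div_div, div_div, mul_comm (G.m r),
    mul_comm (G.m R)]
end

section
/- Let G be a combinatorial graph and x₀ ~ y₀ adjacent vertices. Then there exists a function ρ : B_1(x₀) × B_1(y₀) → {0,1} satisfying Σ_{y∈B_1(y₀)} ρ(x,y) = 1 for all x ~ x₀ and Σ_{x∈B_1(x₀)} ρ(x,y) = 1 for all y ~ y₀, with ρ(z,z)=1 for all z ∈ B_1(x₀) ∩ B_1(y₀), such that κ(x₀,y₀) = Σ_{x,y} ρ(x,y)(1 - d(x,y)). -/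
open scoped BigOperators

/-!
The curvature is an infimum of `Δf(x) - Δf(y)` over `1`-Lipschitz potentials with
`f(y) - f(x) = 1`; restricted to integer potentials it has a minimizer `f`. Lowering `f` by one
on a set of vertices that no `f`-tight pair leaves keeps it admissible, so minimality yields
Hall's condition for matching, along `f`-tight pairs, the neighbours of `x` outside `B₁(y)` that
are not tight towards `y` into the neighbours of `y` outside `B₁(x)`, and symmetrically. The
Mendelsohn–Dulmage theorem merges the two matchings; fixing `B₁(x) ∩ B₁(y)` and sending the
unmatched neighbours to `y` (resp. taking them from `x`) gives a `{0,1}`-plan `ρ` supported on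
`f`-tight pairs. For any such plan `Δφ(x) - Δφ(y) = ∑ ρ(u,v) (1 + φ(u) - φ(v))`, which is at
least `∑ ρ(u,v) (1 - d(u,v))` for `1`-Lipschitz `φ`, with equality for `f` truncated to finite
support.
-/

open Finset Function

theorem Finset.sum_ite_eq_one_of_existsUnique {α R : Type*} [AddCommMonoidWithOne R]
    {s : Finset α} {p : α → Prop} [DecidablePred p] (h : ∃! a, p a) (hs : ∀ a, p a → a ∈ s) :
    ∑ a ∈ s, (if p a then (1 : R) else 0) = 1 := by
  obtain ⟨a, ha, huniq⟩ := h
  rw [sum_eq_single_of_mem a (hs a ha) fun b _ hb ↦ if_neg (mt (huniq b) hb), if_pos ha]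

theorem finsum_finsum_eq_sum_sum {α β M : Type*} [AddCommMonoid M] (F : α → β → M)
    (s : Finset α) (t : Finset β) (h : ∀ a b, F a b ≠ 0 → a ∈ s ∧ b ∈ t) :
    ∑ᶠ a, ∑ᶠ b, F a b = ∑ a ∈ s, ∑ b ∈ t, F a b := by
  rw [finsum_congr fun a ↦ finsum_eq_sum_of_support_subset _ fun b hb ↦ (h a b hb).2]
  refine finsum_eq_sum_of_support_subset _ fun a ha ↦ ?_
  obtain ⟨b, -, hb⟩ := exists_ne_zero_of_sum_ne_zero ha
  exact (h a b hb).1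

theorem Finset.exists_injOn_of_forall_card_le_card_biUnion {ι α : Type*} [DecidableEq α]
    [Nonempty α] {U : Finset ι} (t : ι → Finset α) (h : ∀ s ⊆ U, #s ≤ #(s.biUnion t)) :
    ∃ m : ι → α, Set.InjOn m U ∧ ∀ i ∈ U, m i ∈ t i := by
  classical
  obtain ⟨m, hm, hmt⟩ := (all_card_le_biUnion_card_iff_exists_injective fun i : U ↦ t i).1
    fun s ↦ by
      simpa [card_image_of_injective _ Subtype.val_injective, image_biUnion] using
        h (s.image Subtype.val) fun i hi ↦ by obtain ⟨j, -, rfl⟩ := mem_image.1 hi; exact j.2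
  refine ⟨fun i ↦ if hi : i ∈ U then m ⟨i, hi⟩ else Classical.arbitrary α,
    fun i hi j hj hij ↦ ?_, fun i hi ↦ by simpa [dif_pos hi] using hmt ⟨i, hi⟩⟩
  rw [mem_coe] at hi hj
  dsimp only at hij
  rw [dif_pos hi, dif_pos hj] at hij
  exact congrArg Subtype.val (hm hij)

theorem exists_reachable_finset_of_injOn {α β : Type*} [DecidableEq α] [DecidableEq β]
    {U : Finset α} {W : Finset β} (m : α → β) {g : β → α} (hg : Set.InjOn g W) :
    ∃ R ⊆ U, (∀ a ∈ U, a ∉ W.image g → a ∈ R) ∧ (∀ a ∈ R, m a ∈ W → g (m a) ∈ U → g (m a) ∈ R) ∧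
      ∀ v ∈ W, g v ∈ R → v ∈ R.image m := by
  classical
  let step : α → α → Prop := fun a a' ↦ a ∈ U ∧ m a ∈ W ∧ g (m a) = a'
  refine ⟨U.filter fun a ↦ ∃ a₀ ∈ U, a₀ ∉ W.image g ∧ Relation.ReflTransGen step a₀ a,
    filter_subset _ _, fun a ha ha' ↦ mem_filter.2 ⟨ha, a, ha, ha', .refl⟩, ?_, ?_⟩
  · intro a ha hmW hgU
    obtain ⟨haU, a₀, ha₀, ha₀', hr⟩ := mem_filter.1 ha
    exact mem_filter.2 ⟨hgU, a₀, ha₀, ha₀', hr.tail ⟨haU, hmW, rfl⟩⟩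
  · intro v hv hgv
    obtain ⟨-, a₀, ha₀, ha₀', hr⟩ := mem_filter.1 hgv
    rcases hr.cases_tail with h | ⟨c, hc, hcU, hcW, hcg⟩
    · exact absurd (h ▸ mem_image_of_mem g hv) ha₀'
    · exact mem_image.2 ⟨c, mem_filter.2 ⟨hcU, a₀, ha₀, ha₀', hc⟩, hg hcW hv hcg⟩

/-- The Mendelsohn–Dulmage theorem: follow `m` on the vertices of `U` reachable from
`U \ g(W)` by alternating `m`- and `g`-steps, and `g` on the rest of `W`. -/
theorem exists_matching_of_injOn {α β : Type*} [DecidableEq α] [DecidableEq β] {U : Finset α}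
    {W : Finset β} {m : α → β} {g : β → α} (hm : Set.InjOn m U) (hg : Set.InjOn g W) :
    ∃ P : Finset (α × β), (∀ a b, (a, b) ∈ P → a ∈ U ∧ b = m a ∨ b ∈ W ∧ a = g b) ∧
      Set.InjOn Prod.fst (P : Set (α × β)) ∧ Set.InjOn Prod.snd (P : Set (α × β)) ∧
      U ⊆ P.image Prod.fst ∧ W ⊆ P.image Prod.snd := by
  obtain ⟨R, hRU, hR_start, hR_step, hR_back⟩ := exists_reachable_finset_of_injOn m hg
  let Q := W.filter (· ∉ R.image m)
  have hQ : ∀ v ∈ Q, v ∈ W ∧ v ∉ R.image m := fun v hv ↦ mem_filter.1 hv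
  let P := R.image (fun a ↦ (a, m a)) ∪ Q.image (fun v ↦ (g v, v))
  have hP : ∀ a b, (a, b) ∈ P → a ∈ R ∧ b = m a ∨ b ∈ Q ∧ a = g b := by
    simp only [P, mem_union, mem_image, Prod.mk.injEq]
    rintro a b (⟨a, ha, rfl, rfl⟩ | ⟨v, hv, rfl, rfl⟩)
    exacts [.inl ⟨ha, rfl⟩, .inr ⟨hv, rfl⟩]
  have hR_mem : ∀ a ∈ R, a ∈ P.image Prod.fst ∧ m a ∈ P.image Prod.snd := fun a ha ↦
    ⟨mem_image.2 ⟨(a, m a), mem_union_left _ (mem_image_of_mem _ ha), rfl⟩,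
      mem_image.2 ⟨(a, m a), mem_union_left _ (mem_image_of_mem _ ha), rfl⟩⟩
  have hQ_mem : ∀ v ∈ Q, g v ∈ P.image Prod.fst ∧ v ∈ P.image Prod.snd := fun v hv ↦
    ⟨mem_image.2 ⟨(g v, v), mem_union_right _ (mem_image_of_mem _ hv), rfl⟩,
      mem_image.2 ⟨(g v, v), mem_union_right _ (mem_image_of_mem _ hv), rfl⟩⟩
  refine ⟨P, fun a b hab ↦ ?_, ?_, ?_, fun u hu ↦ ?_, fun v hv ↦ ?_⟩
  · exact (hP a b hab).imp (fun h ↦ ⟨hRU h.1, h.2⟩) fun h ↦ ⟨(hQ _ h.1).1, h.2⟩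
  · rintro ⟨a, b⟩ hp ⟨a', b'⟩ hq (rfl : a = a')
    rcases hP _ _ hp with ⟨ha, rfl⟩ | ⟨hb, rfl⟩ <;>
      rcases hP _ _ hq with ⟨ha', rfl⟩ | ⟨hb', hgb⟩
    · rfl
    · exact absurd (hR_back b' (hQ _ hb').1 (hgb ▸ ha)) (hQ _ hb').2
    · exact absurd (hR_back b (hQ _ hb).1 ha') (hQ _ hb).2
    · rw [hg (hQ _ hb).1 (hQ _ hb').1 hgb]
  · rintro ⟨a, b⟩ hp ⟨a', b'⟩ hq (rfl : b = b')
    rcases hP _ _ hp with ⟨ha, rfl⟩ | ⟨hb, rfl⟩ <;>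
      rcases hP _ _ hq with ⟨ha', hma⟩ | ⟨hb', rfl⟩
    · rw [hm (hRU ha) (hRU ha') hma]
    · exact absurd (mem_image_of_mem m ha) (hQ _ hb').2
    · exact absurd (hma ▸ mem_image_of_mem m ha') (hQ _ hb).2
    · rfl
  · by_cases huR : u ∈ R
    · exact (hR_mem u huR).1
    obtain ⟨v, hv, rfl⟩ := mem_image.1 (not_imp_comm.1 (hR_start u hu) huR)
    refine (hQ_mem v (mem_filter.2 ⟨hv, fun hvm ↦ ?_⟩)).1
    obtain ⟨c, hc, rfl⟩ := mem_image.1 hvm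
    exact huR (hR_step c hc hv hu)
  · by_cases hvm : v ∈ R.image m
    · obtain ⟨c, hc, rfl⟩ := mem_image.1 hvm
      exact (hR_mem c hc).2
    · exact (hQ_mem v (mem_filter.2 ⟨hv, hvm⟩)).2

namespace SimpleGraph

variable {V : Type*} {H : SimpleGraph V} {f : V → ℤ} {a b c x y : V}

theorem Connected.finite_setOf_dist_le_s5 [H.LocallyFinite] (hH : H.Connected) (x : V) (n : ℕ) :
    {t | H.dist x t ≤ n}.Finite := by
  have hwalk : ∀ n : ℕ, {t | ∃ p : H.Walk t x, p.length ≤ n}.Finite := by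
    intro n
    induction n with
    | zero =>
      refine (Set.finite_singleton x).subset ?_
      rintro t ⟨p, hp⟩
      cases p with
      | nil => rfl
      | cons _ _ => simp at hp
    | succ n ih =>
      refine ((ih.biUnion fun s _ ↦ (H.neighborSet s).toFinite).insert x).subset ?_
      rintro t ⟨p, hp⟩
      cases p with
      | nil => exact Set.mem_insert _ _
      | cons h q =>
        exact Set.mem_insert_of_mem _ (Set.mem_biUnion ⟨q, by simpa using hp⟩ h.symm)
  refine (hwalk n).subset fun t ht ↦ ?_
  obtain ⟨p, hp⟩ := hH.exists_walk_length_eq_dist t x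
  exact ⟨p, by rw [hp, dist_comm]; exact ht⟩

variable (H) in
def IntLip (f : V → ℤ) : Prop := ∀ a b, f b - f a ≤ H.dist a b

variable (H) in
def Tight (f : V → ℤ) (a b : V) : Prop := f b - f a = H.dist a b

noncomputable instance (f : V → ℤ) (a b : V) : Decidable (H.Tight f a b) :=
  inferInstanceAs (Decidable (_ = _))

theorem IntLip.neg (hf : H.IntLip f) : H.IntLip (-f) := fun a b ↦ by
  simpa [dist_comm, sub_eq_neg_add, add_comm] using hf b a

theorem tight_neg : H.Tight (-f) a b ↔ H.Tight f b a := by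
  simp only [Tight, Pi.neg_apply, dist_comm (u := a)]
  constructor <;> intro h <;> linarith

theorem tight_self : H.Tight f a a := by simp [Tight]

theorem IntLip.tight_trans (hH : H.Connected) (hf : H.IntLip f) (hab : H.Tight f a b)
    (hbc : H.Tight f b c) : H.Tight f a c := by
  have htri : (H.dist a c : ℤ) ≤ H.dist a b + H.dist b c := by exact_mod_cast hH.dist_triangle
  have := hf a c
  unfold Tight at *
  omega

theorem IntLip.sub_indicator (hf : H.IntLip f) {S : Set V}
    (hS : ∀ a ∈ S, ∀ b ∉ S, ¬ H.Tight f a b) : H.IntLip (f - S.indicator 1) := by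
  intro a b
  have hab := hf a b
  by_cases ha : a ∈ S <;> by_cases hb : b ∈ S
  · simpa [ha, hb] using hab
  · have := hS a ha b hb
    unfold Tight at this
    simp only [Pi.sub_apply, Set.indicator_of_mem ha, Set.indicator_of_notMem hb, Pi.one_apply]
    omega
  · simp only [Pi.sub_apply, Set.indicator_of_mem hb, Set.indicator_of_notMem ha, Pi.one_apply]
    omega
  · simpa [ha, hb] using hab

theorem IntLip.exists_finite_support [H.LocallyFinite] (hH : H.Connected) (hf : H.IntLip f)
    (x : V) (r : ℕ) : ∃ g : V → ℤ, H.IntLip g ∧ (Function.support g).Finite ∧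
      ∀ t, H.dist x t ≤ r → g t = f t - f x := by
  let c : V → ℤ := fun t ↦ max 0 (2 * r - H.dist x t)
  refine ⟨fun t ↦ max (min (f t - f x) (c t)) (-c t), fun a b ↦ ?_, ?_, fun t ht ↦ ?_⟩
  · have h1 := hf a b
    have h2 := hf b a
    have h3 : (H.dist x b : ℤ) ≤ H.dist x a + H.dist a b := by exact_mod_cast hH.dist_triangle
    have h4 : (H.dist x a : ℤ) ≤ H.dist x b + H.dist b a := by exact_mod_cast hH.dist_triangle
    rw [dist_comm (u := b)] at h2 h4
    simp only [c]
    omega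
  · refine (hH.finite_setOf_dist_le_s5 x (2 * r)).subset fun t ht ↦ ?_
    by_contra h
    simp only [Set.mem_ofPred_eq, not_le] at h
    simp only [Function.mem_support, c] at ht
    omega
  · have h1 := hf x t
    have h2 := hf t x
    rw [dist_comm] at h2
    simp only [c]
    omega

variable (H) in
def admissible (x y : V) : Set (V → ℤ) := {f | H.IntLip f ∧ H.Tight f x y}

theorem neg_mem_admissible (hf : f ∈ H.admissible x y) : -f ∈ H.admissible y x :=
  ⟨hf.1.neg, tight_neg.2 hf.2⟩

section LocallyFinite

variable [H.LocallyFinite]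

variable (H) in
def laplacian {R : Type*} [AddCommGroup R] (f : V → R) (x : V) : R :=
  ∑ u ∈ H.neighborFinset x, (f u - f x)

theorem laplacian_neg {R : Type*} [AddCommGroup R] (f : V → R) (x : V) :
    H.laplacian (-f) x = -H.laplacian f x := by
  simp only [laplacian, Pi.neg_apply, ← sum_neg_distrib, neg_sub_neg, neg_sub]

theorem laplacian_sub_indicator (S : Set V) [DecidablePred (· ∈ S)] (hx : x ∉ S) :
    H.laplacian (f - S.indicator 1) x =
      H.laplacian f x - #{u ∈ H.neighborFinset x | u ∈ S} := by
  rw [← sum_boole, laplacian, laplacian, ← sum_sub_distrib]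
  refine sum_congr rfl fun u _ ↦ ?_
  simp only [Pi.sub_apply, Set.indicator_of_notMem hx, Set.indicator_apply, Pi.one_apply]
  ring

theorem exists_isMinOn_laplacian_sub (hH : H.Connected) (x y : V) :
    ∃ f ∈ H.admissible x y,
      IsMinOn (fun f ↦ H.laplacian f x - H.laplacian f y) (H.admissible x y) f := by
  have hbdd : ∀ f ∈ H.admissible x y,
      -(H.degree x + H.degree y : ℤ) ≤ H.laplacian f x - H.laplacian f y := by
    rintro f ⟨hf, -⟩
    have hx : ∀ u ∈ H.neighborFinset x, -1 ≤ f u - f x := fun u hu ↦ by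
      have := hf u x
      rw [dist_comm, dist_eq_one_iff_adj.2 ((H.mem_neighborFinset x u).1 hu)] at this
      omega
    have hy : ∀ v ∈ H.neighborFinset y, f v - f y ≤ 1 := fun v hv ↦ by
      have := hf y v
      rwa [dist_eq_one_iff_adj.2 ((H.mem_neighborFinset y v).1 hv)] at this
    have h1 := card_nsmul_le_sum _ _ _ hx
    have h2 := sum_le_card_nsmul _ _ _ hy
    simp only [card_neighborFinset_eq_degree, nsmul_eq_mul, mul_neg, mul_one] at h1 h2
    unfold laplacian
    linarith
  have hdist : (fun t ↦ (H.dist x t : ℤ)) ∈ H.admissible x y := by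
    refine ⟨fun a b ↦ ?_, by simp [Tight]⟩
    have : (H.dist x b : ℤ) ≤ H.dist x a + H.dist a b := by exact_mod_cast hH.dist_triangle
    dsimp only
    omega
  obtain ⟨_, ⟨f, hf, rfl⟩, hmin⟩ := Int.exists_least_of_bdd
    (P := fun z ↦ ∃ f ∈ H.admissible x y, H.laplacian f x - H.laplacian f y = z)
    ⟨_, by rintro _ ⟨f, hf, rfl⟩; exact hbdd f hf⟩ ⟨_, _, hdist, rfl⟩
  exact ⟨f, hf, isMinOn_iff.2 fun g hg ↦ hmin _ ⟨g, hg, rfl⟩⟩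

theorem IsMinOn.neg_admissible
    (hmin : IsMinOn (fun f ↦ H.laplacian f x - H.laplacian f y) (H.admissible x y) f) :
    IsMinOn (fun f ↦ H.laplacian f y - H.laplacian f x) (H.admissible y x) (-f) :=
  isMinOn_iff.2 fun g hg ↦ by
    have := isMinOn_iff.1 hmin (-g) (by simpa using neg_mem_admissible hg)
    simp only [laplacian_neg] at this ⊢
    linarith

/-- Compare `f` with `f - 1_S`, which is still admissible. -/
theorem card_filter_le_of_isMinOn
    (hmin : IsMinOn (fun f ↦ H.laplacian f x - H.laplacian f y) (H.admissible x y) f)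
    (hf : f ∈ H.admissible x y) (S : Set V) [DecidablePred (· ∈ S)] (hx : x ∉ S) (hy : y ∉ S)
    (hS : ∀ a ∈ S, ∀ b ∉ S, ¬ H.Tight f a b) :
    #{u ∈ H.neighborFinset x | u ∈ S} ≤ #{v ∈ H.neighborFinset y | v ∈ S} := by
  have hg : f - S.indicator 1 ∈ H.admissible x y := by
    refine ⟨hf.1.sub_indicator hS, ?_⟩
    simpa [Tight, Set.indicator_of_notMem hx, Set.indicator_of_notMem hy] using hf.2
  have := isMinOn_iff.1 hmin _ hg
  simp only [laplacian_sub_indicator S hx, laplacian_sub_indicator S hy] at this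
  omega

variable [DecidableEq V]

variable (H) in
def closedNeighborFinset (x : V) : Finset V := insert x (H.neighborFinset x)

variable (H) in
def privateNeighborFinset (x y : V) : Finset V :=
  H.neighborFinset x \ H.closedNeighborFinset y

theorem Connected.mem_closedNeighborFinset_iff (hH : H.Connected) :
    y ∈ H.closedNeighborFinset x ↔ H.dist x y ≤ 1 := by
  rw [closedNeighborFinset, mem_insert, mem_neighborFinset, Nat.le_one_iff_eq_zero_or_eq_one,
    hH.dist_eq_zero_iff, dist_eq_one_iff_adj, eq_comm]

theorem privateNeighborFinset_subset :
    H.privateNeighborFinset x y ⊆ H.closedNeighborFinset x :=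
  fun _ hu ↦ mem_insert_of_mem (mem_sdiff.1 hu).1

theorem card_filter_neighborFinset (S : Set V) [DecidablePred (· ∈ S)] (hy : y ∉ S) :
    #{u ∈ H.neighborFinset x | u ∈ S} =
      #{u ∈ H.neighborFinset x ∩ H.neighborFinset y | u ∈ S} +
        #{u ∈ H.privateNeighborFinset x y | u ∈ S} := by
  rw [← card_union_of_disjoint]
  · congr 1
    ext u
    by_cases huy : u = y
    · subst huy
      simp [hy]
    · simp [privateNeighborFinset, closedNeighborFinset, huy]
      tauto
  · rw [Finset.disjoint_left]
    simp [privateNeighborFinset, closedNeighborFinset]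
    tauto

theorem card_le_card_biUnion_of_isMinOn (hH : H.Connected)
    (hmin : IsMinOn (fun f ↦ H.laplacian f x - H.laplacian f y) (H.admissible x y) f)
    (hf : f ∈ H.admissible x y) {s : Finset V}
    (hs : s ⊆ {u ∈ H.privateNeighborFinset x y | ¬ H.Tight f u y}) :
    #s ≤ #(s.biUnion fun a ↦ {b ∈ H.privateNeighborFinset y x | H.Tight f a b}) := by
  have hs' : ∀ a ∈ s, a ∈ H.privateNeighborFinset x y ∧ ¬ H.Tight f a y :=
    fun a ha ↦ mem_filter.1 (hs ha)
  let S : Set V := {t | ∃ a ∈ s, H.Tight f a t}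
  have hyS : y ∉ S := fun ⟨a, ha, hay⟩ ↦ (hs' a ha).2 hay
  have hxS : x ∉ S := fun ⟨a, ha, hax⟩ ↦ (hs' a ha).2 (hf.1.tight_trans hH hax hf.2)
  have hS : ∀ a ∈ S, ∀ b ∉ S, ¬ H.Tight f a b := fun a ⟨a₀, ha₀, ha⟩ b hb hab ↦
    hb ⟨a₀, ha₀, hf.1.tight_trans hH ha hab⟩
  have hcard := card_filter_le_of_isMinOn hmin hf S hxS hyS hS
  rw [card_filter_neighborFinset S hyS, card_filter_neighborFinset S hxS, inter_comm] at hcard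
  calc #s ≤ #{u ∈ H.privateNeighborFinset x y | u ∈ S} :=
        card_le_card fun a ha ↦ mem_filter.2 ⟨(hs' a ha).1, a, ha, tight_self⟩
    _ ≤ #{v ∈ H.privateNeighborFinset y x | v ∈ S} := by omega
    _ = _ := by
      congr 1
      ext b
      simp only [S, mem_filter, mem_biUnion, Set.mem_ofPred_eq]
      tauto

variable (H) in
def Coupled (x y : V) (P : Finset (V × V)) (u v : V) : Prop :=
  u = v ∧ u ∈ H.closedNeighborFinset x ∧ u ∈ H.closedNeighborFinset y ∨ (u, v) ∈ P ∨
    u ∈ H.privateNeighborFinset x y ∧ u ∉ P.image Prod.fst ∧ v = y ∨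
    u = x ∧ v ∈ H.privateNeighborFinset y x ∧ v ∉ P.image Prod.snd

theorem coupled_swap {P : Finset (V × V)} {u v : V} :
    H.Coupled x y P u v ↔ H.Coupled y x (P.image Prod.swap) v u := by
  simp only [Coupled, image_image, mem_image, Prod.exists, comp_apply, Prod.fst_swap,
    Prod.snd_swap, Prod.swap_prod_mk, Prod.mk.injEq]
  constructor <;> rintro (h | h | h | h) <;> aesop

theorem existsUnique_coupled {P : Finset (V × V)}
    (hP : ∀ p ∈ P, p.1 ∈ H.privateNeighborFinset x y)
    (hinj : Set.InjOn Prod.fst (P : Set (V × V))) {u : V} (hu : u ∈ H.neighborFinset x) :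
    ∃! v, H.Coupled x y P u v := by
  have hux : u ≠ x := ((H.mem_neighborFinset x u).1 hu).ne'
  by_cases huy : u ∈ H.closedNeighborFinset y
  · refine ⟨u, .inl ⟨rfl, mem_insert_of_mem hu, huy⟩, ?_⟩
    rintro v (⟨rfl, -⟩ | hv | ⟨hu', -⟩ | ⟨rfl, -⟩)
    · rfl
    · exact absurd huy (mem_sdiff.1 (hP _ hv)).2
    · exact absurd huy (mem_sdiff.1 hu').2
    · exact absurd rfl hux
  have hpriv : u ∈ H.privateNeighborFinset x y := mem_sdiff.2 ⟨hu, huy⟩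
  by_cases hfst : u ∈ P.image Prod.fst
  · obtain ⟨p, hp, rfl⟩ := mem_image.1 hfst
    refine ⟨p.2, .inr (.inl hp), ?_⟩
    rintro v (⟨-, -, h⟩ | hv | ⟨-, h, -⟩ | ⟨h, -⟩)
    · exact absurd h huy
    · exact congrArg Prod.snd (hinj hv hp rfl)
    · exact absurd hfst h
    · exact absurd h hux
  · refine ⟨y, .inr (.inr (.inl ⟨hpriv, hfst, rfl⟩)), ?_⟩
    rintro v (⟨-, -, h⟩ | hv | ⟨-, -, rfl⟩ | ⟨h, -⟩)
    · exact absurd h huy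
    · exact absurd (mem_image.2 ⟨_, hv, rfl⟩) hfst
    · rfl
    · exact absurd h hux

variable (H) in
/-- `E` is the support of a `{0,1}`-valued transport plan `ρ` on `B₁(x) × B₁(y)` with unit
marginals on `S₁(x)` and `S₁(y)` and `ρ(z,z) = 1` on `B₁(x) ∩ B₁(y)`. -/
structure IsCoupling (x y : V) (E : V → V → Prop) : Prop where
  mem_closedNeighborFinset : ∀ u v, E u v →
    u ∈ H.closedNeighborFinset x ∧ v ∈ H.closedNeighborFinset y
  existsUnique_right : ∀ u ∈ H.neighborFinset x, ∃! v, E u v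
  existsUnique_left : ∀ v ∈ H.neighborFinset y, ∃! u, E u v
  refl : ∀ z ∈ H.closedNeighborFinset x, z ∈ H.closedNeighborFinset y → E z z

theorem IsCoupling.sum_ite_right {E : V → V → Prop} [DecidableRel E] (hE : H.IsCoupling x y E)
    {R : Type*} [AddCommMonoidWithOne R] {u : V} (hu : u ∈ H.neighborFinset x) :
    ∑ v ∈ H.closedNeighborFinset y, (if E u v then (1 : R) else 0) = 1 :=
  sum_ite_eq_one_of_existsUnique (hE.existsUnique_right u hu)
    fun v h ↦ (hE.mem_closedNeighborFinset u v h).2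

theorem IsCoupling.sum_ite_left {E : V → V → Prop} [DecidableRel E] (hE : H.IsCoupling x y E)
    {R : Type*} [AddCommMonoidWithOne R] {v : V} (hv : v ∈ H.neighborFinset y) :
    ∑ u ∈ H.closedNeighborFinset x, (if E u v then (1 : R) else 0) = 1 :=
  sum_ite_eq_one_of_existsUnique (hE.existsUnique_left v hv)
    fun u h ↦ (hE.mem_closedNeighborFinset u v h).1

theorem isCoupling_coupled {P : Finset (V × V)}
    (hP : ∀ p ∈ P, p.1 ∈ H.privateNeighborFinset x y ∧ p.2 ∈ H.privateNeighborFinset y x)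
    (hfst : Set.InjOn Prod.fst (P : Set (V × V)))
    (hsnd : Set.InjOn Prod.snd (P : Set (V × V))) :
    H.IsCoupling x y (H.Coupled x y P) where
  mem_closedNeighborFinset u v := by
    rintro (⟨rfl, hx, hy⟩ | hp | ⟨hu, -, rfl⟩ | ⟨rfl, hv, -⟩)
    · exact ⟨hx, hy⟩
    · exact ⟨privateNeighborFinset_subset (hP _ hp).1, privateNeighborFinset_subset (hP _ hp).2⟩
    · exact ⟨privateNeighborFinset_subset hu, mem_insert_self _ _⟩
    · exact ⟨mem_insert_self _ _, privateNeighborFinset_subset hv⟩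
  existsUnique_right u hu := existsUnique_coupled (fun p hp ↦ (hP p hp).1) hfst hu
  existsUnique_left v hv := by
    refine (existsUnique_congr fun u ↦ coupled_swap).2 (existsUnique_coupled ?_ ?_ hv)
    · simp only [mem_image]
      rintro _ ⟨p, hp, rfl⟩
      exact (hP p hp).2
    · simp only [coe_image]
      rintro _ ⟨p, hp, rfl⟩ _ ⟨q, hq, rfl⟩ h
      rw [hsnd hp hq h]
  refl z hx hy := .inl ⟨rfl, hx, hy⟩

theorem exists_tight_coupling (hH : H.Connected) (x y : V) :
    ∃ (f : V → ℤ) (E : V → V → Prop), f ∈ H.admissible x y ∧ H.IsCoupling x y E ∧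
      ∀ u v, E u v → H.Tight f u v := by
  have : Nonempty V := ⟨x⟩
  obtain ⟨f, hf, hmin⟩ := exists_isMinOn_laplacian_sub hH x y
  obtain ⟨m, hm, hmt⟩ := exists_injOn_of_forall_card_le_card_biUnion _
    fun s hs ↦ card_le_card_biUnion_of_isMinOn hH hmin hf hs
  obtain ⟨g, hg, hgt⟩ := exists_injOn_of_forall_card_le_card_biUnion
    (U := {v ∈ H.privateNeighborFinset y x | ¬ H.Tight f x v})
    (fun b ↦ {a ∈ H.privateNeighborFinset x y | H.Tight f a b}) fun s hs ↦ by
      simpa only [tight_neg] using card_le_card_biUnion_of_isMinOn hH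
        (IsMinOn.neg_admissible hmin) (neg_mem_admissible hf) (by simpa only [tight_neg] using hs)
  obtain ⟨P, hPgraph, hfst, hsnd, hU, hW⟩ := exists_matching_of_injOn hm hg
  have hP : ∀ p ∈ P, p.1 ∈ H.privateNeighborFinset x y ∧ p.2 ∈ H.privateNeighborFinset y x ∧
      H.Tight f p.1 p.2 := by
    rintro ⟨a, b⟩ hp
    rcases hPgraph a b hp with ⟨ha, rfl⟩ | ⟨hb, rfl⟩
    · exact ⟨(mem_filter.1 ha).1, mem_filter.1 (hmt a ha)⟩
    · exact ⟨(mem_filter.1 (hgt b hb)).1, (mem_filter.1 hb).1, (mem_filter.1 (hgt b hb)).2⟩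
  refine ⟨f, H.Coupled x y P, hf,
    isCoupling_coupled (fun p hp ↦ ⟨(hP p hp).1, (hP p hp).2.1⟩) hfst hsnd, ?_⟩
  rintro u v (⟨rfl, -⟩ | hp | ⟨hu, hu', rfl⟩ | ⟨rfl, hv, hv'⟩)
  · exact tight_self
  · exact (hP _ hp).2.2
  · by_contra h
    exact hu' (hU (mem_filter.2 ⟨hu, h⟩))
  · by_contra h
    exact hv' (hW (mem_filter.2 ⟨hv, h⟩))

theorem IsCoupling.exists_finite_support {E : V → V → Prop} (hE : H.IsCoupling x y E)
    (hH : H.Connected) (hf : f ∈ H.admissible x y) (htight : ∀ u v, E u v → H.Tight f u v) :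
    ∃ g ∈ H.admissible x y, (Function.support g).Finite ∧ ∀ u v, E u v → H.Tight g u v := by
  obtain ⟨g, hg, hgsupp, hgf⟩ := hf.1.exists_finite_support hH x (H.dist x y + 1)
  have hball : ∀ t, t ∈ H.closedNeighborFinset x ∨ t ∈ H.closedNeighborFinset y →
      g t = f t - f x := by
    rintro t (ht | ht) <;> rw [hH.mem_closedNeighborFinset_iff] at ht <;> refine hgf t ?_
    · omega
    · have : H.dist x t ≤ H.dist x y + H.dist y t := hH.dist_triangle
      omega
  have hcongr : ∀ a b, a ∈ H.closedNeighborFinset x ∨ a ∈ H.closedNeighborFinset y →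
      b ∈ H.closedNeighborFinset x ∨ b ∈ H.closedNeighborFinset y →
      (H.Tight g a b ↔ H.Tight f a b) := fun a b ha hb ↦ by
    rw [Tight, Tight, hball a ha, hball b hb, sub_sub_sub_cancel_right]
  refine ⟨g, ⟨hg, (hcongr x y (.inl (mem_insert_self _ _)) (.inr (mem_insert_self _ _))).2 hf.2⟩,
    hgsupp, fun u v huv ↦ ?_⟩
  obtain ⟨hu, hv⟩ := hE.mem_closedNeighborFinset u v huv
  exact (hcongr u v (.inl hu) (.inr hv)).2 (htight u v huv)

theorem sum_closedNeighborFinset_mul {R : Type*} [CommRing R] (φ F : V → R)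
    (hF : ∀ u ∈ H.neighborFinset x, F u = 1) :
    ∑ u ∈ H.closedNeighborFinset x, (φ u - φ x) * F u = H.laplacian φ x := by
  rw [closedNeighborFinset, sum_insert (H.notMem_neighborFinset_self x), sub_self, zero_mul,
    zero_add, laplacian]
  exact sum_congr rfl fun u hu ↦ by rw [hF u hu, mul_one]

theorem laplacian_sub_laplacian_eq_sum {R : Type*} [CommRing R] (ρ : V → V → R)
    (hrow : ∀ u ∈ H.neighborFinset x, ∑ v ∈ H.closedNeighborFinset y, ρ u v = 1)
    (hcol : ∀ v ∈ H.neighborFinset y, ∑ u ∈ H.closedNeighborFinset x, ρ u v = 1)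
    {φ : V → R} (hφ : φ y - φ x = 1) :
    H.laplacian φ x - H.laplacian φ y = ∑ u ∈ H.closedNeighborFinset x,
      ∑ v ∈ H.closedNeighborFinset y, ρ u v * (1 + φ u - φ v) := by
  have hsplit : ∀ u v, ρ u v * (1 + φ u - φ v) = (φ u - φ x) * ρ u v - (φ v - φ y) * ρ u v :=
    fun u v ↦ by rw [← hφ]; ring
  simp_rw [hsplit, sum_sub_distrib, ← mul_sum]
  rw [sum_comm]
  simp_rw [← mul_sum]
  rw [sum_closedNeighborFinset_mul φ _ hrow, sum_closedNeighborFinset_mul φ _ hcol]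

end LocallyFinite

end SimpleGraph

namespace WeightedGraph

variable {V : Type} (G : WeightedGraph V)

noncomputable instance : G.toSimple.LocallyFinite :=
  fun x ↦ ((G.locFin x).subset fun _ h ↦ h.2).fintype

variable {G}

theorem lap_eq_laplacian (hcomb : ∀ u v, G.w u v = 0 ∨ G.w u v = 1) (hm : ∀ v, G.m v = 1)
    (φ : V → ℝ) (x : V) : G.lap φ x = G.toSimple.laplacian φ x := by
  rw [lap, hm, div_one, finsum_eq_sum_of_support_subset _ (s := G.toSimple.neighborFinset x)]
  · refine sum_congr rfl fun y hy ↦ ?_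
    rw [(hcomb x y).resolve_left ((G.toSimple.mem_neighborFinset x y).1 hy).2, one_mul]
  · intro y hy
    have hw : G.w x y ≠ 0 := left_ne_zero_of_mul hy
    exact (G.toSimple.mem_neighborFinset x y).2 ⟨fun h ↦ hw (h ▸ G.loopless x), hw⟩

theorem lip1_intCast {g : V → ℤ} (hg : G.toSimple.IntLip g) : G.Lip1 fun t ↦ (g t : ℝ) :=
  fun a b ↦ by
    have h1 := hg b a
    have h2 := hg a b
    rw [SimpleGraph.dist_comm] at h1
    dsimp only
    rw [abs_sub_le_iff, WeightedGraph.dist]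
    exact ⟨by exact_mod_cast h1, by exact_mod_cast h2⟩

theorem curv_eq_sum_of_isCoupling [DecidableEq V] (hcomb : ∀ u v, G.w u v = 0 ∨ G.w u v = 1)
    (hm : ∀ v, G.m v = 1) {x y : V} (hxy : G.toSimple.Adj x y) {E : V → V → Prop}
    [DecidableRel E] (hE : G.toSimple.IsCoupling x y E) {g : V → ℤ}
    (hg : g ∈ G.toSimple.admissible x y) (hgsupp : (Function.support g).Finite)
    (htight : ∀ u v, E u v → G.toSimple.Tight g u v) :
    G.curv x y = ∑ u ∈ G.toSimple.closedNeighborFinset x, ∑ v ∈ G.toSimple.closedNeighborFinset y,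
      (if E u v then 1 else 0) * (1 - (G.dist u v : ℝ)) := by
  have hd : G.dist x y = 1 := SimpleGraph.dist_eq_one_iff_adj.2 hxy
  have key : ∀ φ : V → ℝ, φ y - φ x = 1 → (G.lap φ x - G.lap φ y) / G.dist x y =
      ∑ u ∈ G.toSimple.closedNeighborFinset x, ∑ v ∈ G.toSimple.closedNeighborFinset y,
        (if E u v then 1 else 0) * (1 + φ u - φ v) := fun φ hφ ↦ by
    rw [hd, Nat.cast_one, div_one, lap_eq_laplacian hcomb hm, lap_eq_laplacian hcomb hm]
    exact SimpleGraph.laplacian_sub_laplacian_eq_sum _ (fun u ↦ hE.sum_ite_right)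
      (fun v ↦ hE.sum_ite_left) hφ
  have hgxy : (g y : ℝ) - g x = 1 := by
    have : g y - g x = 1 := hg.2.trans (congrArg _ hd)
    exact_mod_cast this
  refine IsLeast.csInf_eq ⟨⟨fun t ↦ g t, lip1_intCast hg.1, ?_, by rw [hgxy, hd, Nat.cast_one],
    ?_⟩, ?_⟩
  · simpa only [Function.support, ne_eq, Int.cast_eq_zero] using hgsupp
  · rw [key _ hgxy]
    refine sum_congr rfl fun u _ ↦ sum_congr rfl fun v _ ↦ ?_
    split_ifs with h
    · have : (g v : ℝ) - g u = G.dist u v := by exact_mod_cast htight u v h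
      rw [← this]
      ring
    · simp
  · rintro c ⟨φ, hφ, -, hφxy, rfl⟩
    rw [key φ (by rw [hφxy, hd, Nat.cast_one])]
    refine sum_le_sum fun u _ ↦ sum_le_sum fun v _ ↦ ?_
    split_ifs
    · have := (abs_sub_le_iff.1 (hφ v u)).1
      rw [WeightedGraph.dist, SimpleGraph.dist_comm] at this
      rw [WeightedGraph.dist]
      linarith
    · simp

end WeightedGraph

theorem stmt5_general {V : Type} (G : WeightedGraph V)
    (hconn : G.toSimple.Connected)
    (hcomb : ∀ u v, G.w u v = 0 ∨ G.w u v = 1) (hm : ∀ v, G.m v = 1)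
    (x₀ y₀ : V) (hadj : G.toSimple.Adj x₀ y₀) :
    ∃ ρ : V → V → ℝ,
      (∀ u v, ρ u v = 0 ∨ ρ u v = 1) ∧
      (∀ u v, ρ u v ≠ 0 → G.dist x₀ u ≤ 1 ∧ G.dist y₀ v ≤ 1) ∧
      (∀ u, G.toSimple.Adj x₀ u → (∑ᶠ v ∈ {v | G.dist y₀ v ≤ 1}, ρ u v) = 1) ∧
      (∀ v, G.toSimple.Adj y₀ v → (∑ᶠ u ∈ {u | G.dist x₀ u ≤ 1}, ρ u v) = 1) ∧
      (∀ z, G.dist x₀ z ≤ 1 → G.dist y₀ z ≤ 1 → ρ z z = 1) ∧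
      G.curv x₀ y₀ = ∑ᶠ u, ∑ᶠ v, ρ u v * (1 - (G.dist u v : ℝ)) := by
  classical
  obtain ⟨f, E, hf, hE, htight⟩ := G.toSimple.exists_tight_coupling hconn x₀ y₀
  obtain ⟨g, hg, hgsupp, hgtight⟩ := hE.exists_finite_support hconn hf htight
  have hball : ∀ z, {v | G.dist z v ≤ 1} = ↑(G.toSimple.closedNeighborFinset z) := fun z ↦
    Set.ext fun _ ↦ hconn.mem_closedNeighborFinset_iff.symm
  have hE_of_ne : ∀ u v, (if E u v then (1 : ℝ) else 0) ≠ 0 → E u v :=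
    fun u v h ↦ (ite_ne_right_iff.1 h).1
  refine ⟨fun u v ↦ if E u v then 1 else 0, fun u v ↦ (ite_eq_or_eq ..).symm,
    fun u v h ↦ ?_, fun u hu ↦ ?_, fun v hv ↦ ?_, fun z hx hy ↦ if_pos ?_, ?_⟩
  · exact (hE.mem_closedNeighborFinset u v (hE_of_ne u v h)).imp
      hconn.mem_closedNeighborFinset_iff.1 hconn.mem_closedNeighborFinset_iff.1
  · rw [hball, finsum_mem_coe_finset]
    exact hE.sum_ite_right ((G.toSimple.mem_neighborFinset _ _).2 hu)
  · rw [hball, finsum_mem_coe_finset]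
    exact hE.sum_ite_left ((G.toSimple.mem_neighborFinset _ _).2 hv)
  · exact hE.refl z (hconn.mem_closedNeighborFinset_iff.2 hx)
      (hconn.mem_closedNeighborFinset_iff.2 hy)
  · rw [G.curv_eq_sum_of_isCoupling hcomb hm hadj hE hg hgsupp hgtight,
      finsum_finsum_eq_sum_sum _ _ _ fun u v h ↦
        hE.mem_closedNeighborFinset u v (hE_of_ne u v (left_ne_zero_of_mul h))]

/-- On a combinatorial graph, for adjacent `x₀ ∼ y₀` there is a `{0,1}`-valued optimal transport
plan `ρ` on `B_1(x₀) × B_1(y₀)` with unit marginals on the neighbors of `x₀` resp. `y₀`,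
`ρ(z,z) = 1` on `B_1(x₀) ∩ B_1(y₀)`, realizing `κ(x₀,y₀) = ∑_{x,y} ρ(x,y)(1 - d(x,y))`. -/
theorem stmt5 {V : Type} [Countable V] (G : WeightedGraph V)
    (hconn : G.toSimple.Connected)
    (hcomb : ∀ u v, G.w u v = 0 ∨ G.w u v = 1) (hm : ∀ v, G.m v = 1)
    (x₀ y₀ : V) (hadj : G.toSimple.Adj x₀ y₀) :
    ∃ ρ : V → V → ℝ,
      (∀ u v, ρ u v = 0 ∨ ρ u v = 1) ∧
      (∀ u v, ρ u v ≠ 0 → G.dist x₀ u ≤ 1 ∧ G.dist y₀ v ≤ 1) ∧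
      (∀ u, G.toSimple.Adj x₀ u → (∑ᶠ v ∈ {v | G.dist y₀ v ≤ 1}, ρ u v) = 1) ∧
      (∀ v, G.toSimple.Adj y₀ v → (∑ᶠ u ∈ {u | G.dist x₀ u ≤ 1}, ρ u v) = 1) ∧
      (∀ z, G.dist x₀ z ≤ 1 → G.dist y₀ z ≤ 1 → ρ z z = 1) ∧
      G.curv x₀ y₀ = ∑ᶠ u, ∑ᶠ v, ρ u v * (1 - (G.dist u v : ℝ)) :=
  stmt5_general G hconn hcomb hm x₀ y₀ hadj
end
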